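/- arXiv:1803.07484 — 3 statements merged into one kernel-verified Lean document; each statement's English description precedes it below -/
import Mathlib

section
/- Fix a real p > 1 and a list of positive integers s₁ < s₂ < … < s_n with total sum 2s. Construct 2n jobs: for each i, jobs A_i and B_i, both of processing time s_i; and two agents with preferred schedules σ_a = (A₁, B₁, A₂, B₂, …, A_n, B_n) and σ_b = (B₁, A₁, B₂, A₂, …, B_n, A_n). Then there exists a schedule σ of the 2n jobs with T(σ,σ_a)^p + T(σ,σ_b)^p ≤ 2·s^p if and only if the multiset {s₁,…,s_n} can be partitioned into two disjoint subsets each of sum s. -/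
/-- Completion time of job `i` in a schedule `τ : J ≃ Fin N` (a bijection from
jobs to positions), with processing times `p`. -/
def completionTime {J : Type*} [Fintype J] {N : ℕ} (p : J → ℕ) (τ : J ≃ Fin N)
    (i : J) : ℕ :=
  ∑ j ∈ Finset.univ.filter (fun j => τ j ≤ τ i), p j

/-- Tardiness cost: `∑ i, max (0, C_i(τ) - C_i(σ))`. -/
def tardiness {J : Type*} [Fintype J] {N : ℕ} (p : J → ℕ) (τ σ : J ≃ Fin N) : ℕ :=
  ∑ i : J, (completionTime p τ i - completionTime p σ i)

/-!
For a schedule `τ`, let `F` be the set of pairs `i` whose job `A_i` comes first in `τ`, and let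
`L_i` be the job of pair `i` that comes second. Both jobs of every pair whose second job precedes
`L_i` are finished at `L_i`, so `C_{L_i}(τ) ≥ 2 ∑_{j : L_j ≤ L_i} s_j`; summed over `i` this is at
least `2 ∑_i ∑_{j ≤ i} s_j`, its value for the sorted order since `s` is monotone. In `σ_b` the
jobs `L_i` finish in total exactly `∑_{i ∈ F} s_i` earlier than that, hence
`T(τ, σ_b) ≥ ∑_{i ∈ F} s_i`, and likewise `T(τ, σ_a) ≥ ∑_{i ∉ F} s_i`. The two lower bounds add
up to `2s`, so by strict convexity of `x ↦ x ^ p` the bound `2 s ^ p` forces both to be `s`.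
Conversely, keeping the pairs in order and putting `A_i` first exactly for `i ∈ A` gives
tardinesses `∑_{i ∉ A} s_i` and `∑_{i ∈ A} s_i`.
-/

open Finset

section Rearrangement

variable {ι α M : Type*} [Fintype ι] [LinearOrder ι] [LinearOrder α]
  [AddCommMonoid M] [LinearOrder M] [IsOrderedCancelAddMonoid M]

theorem Monotone.sum_sum_filter_le_le_of_injective {s : ι → M} (hs : Monotone s) {e : ι → α}
    (he : Function.Injective e) :
    ∑ i, ∑ j with j ≤ i, s j ≤ ∑ i, ∑ j with e j ≤ e i, s j := by
  simp only [sum_filter]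
  set f : ι → ι → M := fun i j => if j ≤ i then s j else 0
  set g : ι → ι → M := fun i j => if e j ≤ e i then s j else 0
  -- An unordered pair `{i, j}` contributes `s (min i j)` on the left, `s i` or `s j` on the right.
  have hpair : ∀ i j, f i j + f j i ≤ g i j + g j i := by
    intro i j
    rcases eq_or_ne i j with rfl | hij
    · simp [f, g]
    have := he.ne hij
    rcases hij.lt_or_gt with h | h <;> simp only [f, g, h.le, h.not_ge, if_true, if_false] <;>
      split_ifs <;> first | (exfalso; order) | simp [hs h.le]
  have hsymm (h : ι → ι → M) :
      ∑ i, ∑ j, (h i j + h j i) = ∑ i, ∑ j, h i j + ∑ i, ∑ j, h i j := by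
    simp only [sum_add_distrib]
    rw [sum_comm (f := fun i j => h j i)]
  have htotal : ∑ i, ∑ j, (f i j + f j i) ≤ ∑ i, ∑ j, (g i j + g j i) :=
    sum_le_sum fun i _ => sum_le_sum fun j _ => hpair i j
  rw [hsymm, hsymm] at htotal
  exact le_of_not_gt fun hlt => htotal.not_gt (add_lt_add hlt hlt)

end Rearrangement

theorem eq_of_add_eq_two_mul_of_rpow_add_rpow_le {p : ℝ} (hp : 1 < p) {u v c : ℝ} (hu : 0 ≤ u)
    (hv : 0 ≤ v) (huv : u + v = 2 * c) (h : u ^ p + v ^ p ≤ 2 * c ^ p) : u = c := by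
  suffices u = v by linarith
  by_contra hne
  have := (strictConvexOn_rpow hp).2 (Set.mem_Ici.2 hu) (Set.mem_Ici.2 hv) hne
    (by norm_num : (0 : ℝ) < 1 / 2) (by norm_num : (0 : ℝ) < 1 / 2) (by norm_num)
  simp only [smul_eq_mul] at this
  rw [show 1 / 2 * u + 1 / 2 * v = c by linarith] at this
  linarith

open scoped symmDiff

section Later

variable {ι : Type*} {N : ℕ}

theorem completionTime_sum_elim [Fintype ι] (s : ι → ℕ) (τ : ι ⊕ ι ≃ Fin N) (x : ι ⊕ ι) :
    completionTime (Sum.elim s s) τ x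
      = ∑ j, ((if τ (.inl j) ≤ τ x then s j else 0) + (if τ (.inr j) ≤ τ x then s j else 0)) := by
  rw [completionTime, sum_filter, Fintype.sum_sum_type, ← sum_add_distrib]
  rfl

def inlFirst [Fintype ι] (τ : ι ⊕ ι ≃ Fin N) : Finset ι :=
  univ.filter fun i => τ (.inl i) < τ (.inr i)

@[simp]
theorem mem_inlFirst [Fintype ι] {τ : ι ⊕ ι ≃ Fin N} {i : ι} :
    i ∈ inlFirst τ ↔ τ (.inl i) < τ (.inr i) := by
  simp [inlFirst]

def later (τ : ι ⊕ ι ≃ Fin N) (i : ι) : ι ⊕ ι :=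
  if τ (.inl i) < τ (.inr i) then .inr i else .inl i

theorem later_injective (τ : ι ⊕ ι ≃ Fin N) : Function.Injective (later τ) := by
  intro i j h
  unfold later at h
  split_ifs at h <;> simpa using h

theorem le_apply_later (τ : ι ⊕ ι ≃ Fin N) (i : ι) :
    τ (.inl i) ≤ τ (later τ i) ∧ τ (.inr i) ≤ τ (later τ i) := by
  unfold later
  split_ifs with h
  · exact ⟨h.le, le_rfl⟩
  · exact ⟨le_rfl, not_lt.1 h⟩

theorem two_mul_sum_le_completionTime_later [Fintype ι] (s : ι → ℕ) (τ : ι ⊕ ι ≃ Fin N)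
    (i : ι) :
    2 * ∑ j with τ (later τ j) ≤ τ (later τ i), s j
      ≤ completionTime (Sum.elim s s) τ (later τ i) := by
  rw [completionTime_sum_elim, sum_filter, mul_sum]
  refine sum_le_sum fun j _ => ?_
  have := le_apply_later τ j
  split_ifs <;> omega

end Later

section PairSchedule

variable {n : ℕ}

/-- The schedule placing the pair `i` at positions `2i, 2i+1`, with `A_i` first iff `i ∈ A`. -/
def pairPosition (A : Finset (Fin n)) : Fin n ⊕ Fin n → Fin (2 * n) :=
  Sum.elim (fun i => ⟨2 * i + if i ∈ A then 0 else 1, by split_ifs <;> omega⟩)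
    (fun i => ⟨2 * i + if i ∈ A then 1 else 0, by split_ifs <;> omega⟩)

theorem pairPosition_injective (A : Finset (Fin n)) : Function.Injective (pairPosition A) := by
  rintro (i | i) (j | j) h <;>
    simp only [pairPosition, Sum.elim_inl, Sum.elim_inr, Fin.mk.injEq] at h <;>
    split_ifs at h <;> grind

noncomputable def pairSchedule (A : Finset (Fin n)) : Fin n ⊕ Fin n ≃ Fin (2 * n) :=
  .ofBijective (pairPosition A) <| (Fintype.bijective_iff_injective_and_card _).2
    ⟨pairPosition_injective A, by simp [two_mul]⟩

@[simp]
theorem pairSchedule_inl (A : Finset (Fin n)) (i : Fin n) :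
    (pairSchedule A (.inl i) : ℕ) = 2 * i + if i ∈ A then 0 else 1 := rfl

@[simp]
theorem pairSchedule_inr (A : Finset (Fin n)) (i : Fin n) :
    (pairSchedule A (.inr i) : ℕ) = 2 * i + if i ∈ A then 1 else 0 := rfl

theorem eq_pairSchedule_of_apply (A : Finset (Fin n)) (σ : Fin n ⊕ Fin n ≃ Fin (2 * n))
    (hσ : ∀ i, (σ (.inl i) : ℕ) = (pairSchedule A (.inl i) : ℕ) ∧
      (σ (.inr i) : ℕ) = (pairSchedule A (.inr i) : ℕ)) : σ = pairSchedule A := by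
  ext (i | i) <;> simp only [(hσ i).1, (hσ i).2]

variable (s : Fin n → ℕ) (A : Finset (Fin n)) (i : Fin n)

theorem sum_eq_two_mul_sum_Iio_add {c : ℕ} {f : Fin n → ℕ}
    (hf : ∀ j, f j = if j < i then 2 * s j else if j = i then c * s i else 0) :
    ∑ j, f j = 2 * ∑ j ∈ Iio i, s j + c * s i := by
  rw [← sum_filter_add_sum_filter_not univ (· < i), mul_sum, filter_gt_eq_Iio]
  congr 1
  · exact sum_congr rfl fun j hj => by simp [hf, mem_Iio.1 hj]
  · rw [sum_eq_single_of_mem i (by simp)] <;> grind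

theorem completionTime_pairSchedule_inl :
    completionTime (Sum.elim s s) (pairSchedule A) (.inl i)
      = 2 * ∑ j ∈ Iio i, s j + (if i ∈ A then 1 else 2) * s i := by
  rw [completionTime_sum_elim]
  refine sum_eq_two_mul_sum_Iio_add s i fun j => ?_
  simp only [Fin.le_def, pairSchedule_inl, pairSchedule_inr, Fin.lt_def, Fin.ext_iff]
  split_ifs <;> grind

theorem completionTime_pairSchedule_inr :
    completionTime (Sum.elim s s) (pairSchedule A) (.inr i)
      = 2 * ∑ j ∈ Iio i, s j + (if i ∈ A then 2 else 1) * s i := by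
  rw [completionTime_sum_elim]
  refine sum_eq_two_mul_sum_Iio_add s i fun j => ?_
  simp only [Fin.le_def, pairSchedule_inl, pairSchedule_inr, Fin.lt_def, Fin.ext_iff]
  split_ifs <;> grind

end PairSchedule

section Tardiness

variable {n : ℕ} (s : Fin n → ℕ)

theorem tardiness_pairSchedule (A B : Finset (Fin n)) :
    tardiness (Sum.elim s s) (pairSchedule A) (pairSchedule B) = ∑ i ∈ A ∆ B, s i := by
  rw [tardiness, Fintype.sum_sum_type, ← sum_add_distrib, ← sum_ite_mem_eq (A ∆ B)]
  refine sum_congr rfl fun i _ => ?_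
  simp only [completionTime_pairSchedule_inl, completionTime_pairSchedule_inr, mem_symmDiff]
  split_ifs <;> grind

theorem completionTime_later_pairSchedule_add (τ : Fin n ⊕ Fin n ≃ Fin (2 * n))
    (A : Finset (Fin n)) (i : Fin n) :
    completionTime (Sum.elim s s) (pairSchedule A) (later τ i)
        + (if i ∈ inlFirst τ ∆ A then s i else 0) = 2 * ∑ j ∈ Iic i, s j := by
  rw [Iic_eq_cons_Iio, sum_cons, later]
  split_ifs <;>
    simp_all only [completionTime_pairSchedule_inl, completionTime_pairSchedule_inr,
      mem_symmDiff, mem_inlFirst] <;> grind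

theorem sum_symmDiff_inlFirst_le_tardiness (hs : Monotone s) (τ : Fin n ⊕ Fin n ≃ Fin (2 * n))
    (A : Finset (Fin n)) :
    ∑ i ∈ inlFirst τ ∆ A, s i ≤ tardiness (Sum.elim s s) τ (pairSchedule A) := by
  set L := later τ
  set C := completionTime (Sum.elim s s) τ
  set C' := completionTime (Sum.elim s s) (pairSchedule A)
  have hτ : 2 * ∑ i, ∑ j ∈ Iic i, s j ≤ ∑ i, C (L i) :=
    calc 2 * ∑ i, ∑ j ∈ Iic i, s j ≤ 2 * ∑ i, ∑ j with τ (L j) ≤ τ (L i), s j :=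
          Nat.mul_le_mul_left 2 <| by
            simpa [filter_ge_eq_Iic] using
              hs.sum_sum_filter_le_le_of_injective (τ.injective.comp (later_injective τ))
      _ ≤ ∑ i, C (L i) := by
          rw [mul_sum]
          exact sum_le_sum fun i _ => two_mul_sum_le_completionTime_later s τ i
  have hσ : ∑ i, C' (L i) + ∑ i ∈ inlFirst τ ∆ A, s i = 2 * ∑ i, ∑ j ∈ Iic i, s j := by
    rw [← sum_ite_mem_eq (inlFirst τ ∆ A), ← sum_add_distrib, mul_sum]
    exact sum_congr rfl fun i _ => completionTime_later_pairSchedule_add s τ A i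
  have hT : ∑ i, (C (L i) - C' (L i)) ≤ tardiness (Sum.elim s s) τ (pairSchedule A) := by
    change _ ≤ ∑ x, (C x - C' x)
    rw [← sum_image (f := fun x => C x - C' x) fun i _ j _ h => later_injective τ h]
    exact sum_le_sum_of_subset (subset_univ _)
  have hsplit : ∑ i, C (L i) ≤ ∑ i, (C (L i) - C' (L i)) + ∑ i, C' (L i) := by
    rw [← sum_add_distrib]
    exact sum_le_sum fun i _ => le_tsub_add
  omega

end Tardiness

theorem lp_tardiness_partition_reduction_general (p : ℝ) (hp : 1 < p) (n : ℕ)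
    (s : Fin n → ℕ) (hmono : StrictMono s)
    (sval : ℕ) (hsum : ∑ i : Fin n, s i = 2 * sval)
    (σa σb : (Fin n ⊕ Fin n) ≃ Fin (2 * n))
    (hσa : ∀ i : Fin n, (σa (Sum.inl i) : ℕ) = 2 * (i : ℕ) ∧
      (σa (Sum.inr i) : ℕ) = 2 * (i : ℕ) + 1)
    (hσb : ∀ i : Fin n, (σb (Sum.inr i) : ℕ) = 2 * (i : ℕ) ∧
      (σb (Sum.inl i) : ℕ) = 2 * (i : ℕ) + 1) :
    (∃ σ : (Fin n ⊕ Fin n) ≃ Fin (2 * n),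
        ((tardiness (Sum.elim s s) σ σa : ℝ) ^ p
          + (tardiness (Sum.elim s s) σ σb : ℝ) ^ p ≤ 2 * (sval : ℝ) ^ p))
      ↔ (∃ A : Finset (Fin n), ∑ i ∈ A, s i = sval ∧ ∑ i ∈ Aᶜ, s i = sval) := by
  obtain rfl : σa = pairSchedule univ := eq_pairSchedule_of_apply _ _ fun i => by simp [hσa]
  obtain rfl : σb = pairSchedule ∅ := eq_pairSchedule_of_apply _ _ fun i => by simp [hσb]
  have hbot (A : Finset (Fin n)) : A ∆ ∅ = A := symmDiff_bot A
  have htop (A : Finset (Fin n)) : A ∆ univ = Aᶜ := (symmDiff_top A).trans hnot_eq_compl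
  have hcompl (A : Finset (Fin n)) : ∑ i ∈ A, s i + ∑ i ∈ Aᶜ, s i = 2 * sval := by
    rw [sum_add_sum_compl, hsum]
  constructor
  · rintro ⟨τ, hτ⟩
    set F := inlFirst τ
    have ha : ∑ i ∈ Fᶜ, s i ≤ tardiness (Sum.elim s s) τ (pairSchedule univ) := by
      simpa only [htop] using sum_symmDiff_inlFirst_le_tardiness s hmono.monotone τ univ
    have hb : ∑ i ∈ F, s i ≤ tardiness (Sum.elim s s) τ (pairSchedule ∅) := by
      simpa only [hbot] using sum_symmDiff_inlFirst_le_tardiness s hmono.monotone τ ∅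
    have hFc : ((∑ i ∈ Fᶜ, s i : ℕ) : ℝ) = sval :=
      eq_of_add_eq_two_mul_of_rpow_add_rpow_le hp (Nat.cast_nonneg _) (Nat.cast_nonneg _)
        (by exact_mod_cast add_comm (∑ i ∈ F, s i) _ ▸ hcompl F)
        ((add_le_add (by gcongr) (by gcongr)).trans hτ)
    exact ⟨F, by have := hcompl F; norm_cast at hFc; omega⟩
  · rintro ⟨A, hA, hAc⟩
    refine ⟨pairSchedule A, le_of_eq ?_⟩
    rw [tardiness_pairSchedule, tardiness_pairSchedule, htop, hbot, hA, hAc]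
    ring

/-- Core of the NP-hardness of the L_p-T rule (reduction from Partition).
Jobs `A_i = Sum.inl i` and `B_i = Sum.inr i` both have processing time `s i`,
where `s₁ < … < s_n` are positive with total sum `2·sval`; agent a prefers
`(A₁,B₁,…,A_n,B_n)` and agent b prefers `(B₁,A₁,…,B_n,A_n)`.  Then there is a
schedule `σ` with `T(σ,σa)^p + T(σ,σb)^p ≤ 2·sval^p` iff `{s₁,…,s_n}` can be
partitioned into two disjoint subsets each summing to `sval`. -/
theorem lp_tardiness_partition_reduction (p : ℝ) (hp : 1 < p) (n : ℕ)
    (s : Fin n → ℕ) (hmono : StrictMono s) (hpos : ∀ i, 0 < s i)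
    (sval : ℕ) (hsum : ∑ i : Fin n, s i = 2 * sval)
    (σa σb : (Fin n ⊕ Fin n) ≃ Fin (2 * n))
    (hσa : ∀ i : Fin n, (σa (Sum.inl i) : ℕ) = 2 * (i : ℕ) ∧
      (σa (Sum.inr i) : ℕ) = 2 * (i : ℕ) + 1)
    (hσb : ∀ i : Fin n, (σb (Sum.inr i) : ℕ) = 2 * (i : ℕ) ∧
      (σb (Sum.inl i) : ℕ) = 2 * (i : ℕ) + 1) :
    (∃ σ : (Fin n ⊕ Fin n) ≃ Fin (2 * n),
        ((tardiness (Sum.elim s s) σ σa : ℝ) ^ p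
          + (tardiness (Sum.elim s s) σ σb : ℝ) ^ p ≤ 2 * (sval : ℝ) ^ p))
      ↔ (∃ A : Finset (Fin n), ∑ i ∈ A, s i = sval ∧ ∑ i ∈ Aᶜ, s i = sval) :=
  lp_tardiness_partition_reduction_general p hp n s hmono sval hsum σa σb hσa hσb
end

section
/- In the two-agent Partition instance (jobs A_i, B_i of length s_i for i = 1,…,n with s₁ < … < s_n and ∑ s_i = 2s; agent a prefers (A₁,B₁,…,A_n,B_n), agent b prefers (B₁,A₁,…,B_n,A_n)), let σ be any schedule in which, for every i, the two jobs A_i and B_i occupy two consecutive positions 2i−1 and 2i (in either order). Then T(σ,σ_a) + T(σ,σ_b) = 2s; specifically, each pair placed in order (A_i, B_i) contributes s_i to agent b's tardiness and 0 to agent a's, and each pair placed in order (B_i, A_i) contributes s_i to agent a's tardiness and 0 to agent b's. -/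
/-!
When both jobs of every pair have the same length, the length of the job at a position `k`
is `s (k / 2)` in every schedule that keeps the pairs at positions `2i, 2i+1`. Completion
times then depend on positions only, so a job is late with respect to another such schedule
exactly when its pair is flipped and it moved from `2i` to `2i+1`, by `s i`. Each flipped pair
thus costs `s i` to the agent whose order it breaks, and every pair is flipped for exactly
one of the two agents.
-/

open Finset

lemma completionTime_eq_sum_Iic {J : Type*} [Fintype J] {N : ℕ} (p : J → ℕ)
    (τ : J ≃ Fin N) (i : J) :
    completionTime p τ i = ∑ k ∈ Iic (τ i), p (τ.symm k) :=
  sum_equiv τ (by simp) (by simp)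

lemma Fin.sum_Iic_of_val_eq_add_one {M : Type*} [AddCommMonoid M] {N : ℕ} (q : Fin N → M)
    {a b : Fin N} (h : (b : ℕ) = a + 1) :
    ∑ k ∈ Iic b, q k = ∑ k ∈ Iic a, q k + q b := by
  have hIic : Iic b = insert b (Iic a) := by
    ext k
    simp only [mem_Iic, mem_insert, Fin.le_def, Fin.ext_iff]
    omega
  rw [hIic, sum_insert (by simp [Fin.le_def, h]), add_comm]

section PairedSchedules

variable {n : ℕ}

def IsPairedSchedule (τ : (Fin n ⊕ Fin n) ≃ Fin (2 * n)) : Prop :=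
  ∀ i : Fin n,
    ((τ (Sum.inl i) : ℕ) = 2 * (i : ℕ) ∧ (τ (Sum.inr i) : ℕ) = 2 * (i : ℕ) + 1) ∨
    ((τ (Sum.inr i) : ℕ) = 2 * (i : ℕ) ∧ (τ (Sum.inl i) : ℕ) = 2 * (i : ℕ) + 1)

def pairLength (s : Fin n → ℕ) (k : Fin (2 * n)) : ℕ :=
  s ⟨k / 2, by omega⟩

def pairedCompletion (s : Fin n → ℕ) (m : Fin (2 * n)) : ℕ :=
  ∑ k ∈ Iic m, pairLength s k

lemma pairLength_eq (s : Fin n → ℕ) {k : Fin (2 * n)} {i : Fin n} (h : (k : ℕ) / 2 = i) :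
    pairLength s k = s i :=
  congrArg s (Fin.ext h)

lemma pairedCompletion_of_val_eq_add_one (s : Fin n → ℕ) {a b : Fin (2 * n)} {i : Fin n}
    (hab : (b : ℕ) = a + 1) (hb : (b : ℕ) / 2 = i) :
    pairedCompletion s b = pairedCompletion s a + s i := by
  rw [pairedCompletion, Fin.sum_Iic_of_val_eq_add_one _ hab, pairLength_eq s hb,
    pairedCompletion]

variable {s : Fin n → ℕ} {σ ρ : (Fin n ⊕ Fin n) ≃ Fin (2 * n)}

lemma IsPairedSchedule.elim_eq_pairLength (hσ : IsPairedSchedule σ) (j : Fin n ⊕ Fin n) :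
    Sum.elim s s j = pairLength s (σ j) := by
  rcases j with i | i <;> rcases hσ i with ⟨h₁, h₂⟩ | ⟨h₁, h₂⟩ <;>
    exact (pairLength_eq s (by omega)).symm

lemma IsPairedSchedule.completionTime_eq (hσ : IsPairedSchedule σ) (j : Fin n ⊕ Fin n) :
    completionTime (Sum.elim s s) σ j = pairedCompletion s (σ j) := by
  rw [completionTime_eq_sum_Iic, pairedCompletion]
  exact sum_congr rfl fun k _ => by rw [hσ.elim_eq_pairLength, σ.apply_symm_apply]

lemma IsPairedSchedule.pair_lateness_eq (hσ : IsPairedSchedule σ) (hρ : IsPairedSchedule ρ)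
    (i : Fin n) :
    (pairedCompletion s (σ (Sum.inl i)) - pairedCompletion s (ρ (Sum.inl i))) +
        (pairedCompletion s (σ (Sum.inr i)) - pairedCompletion s (ρ (Sum.inr i))) =
      if σ (Sum.inl i) ≠ ρ (Sum.inl i) then s i else 0 := by
  rcases hσ i with ⟨hσl, hσr⟩ | ⟨hσr, hσl⟩ <;>
    rcases hρ i with ⟨hρl, hρr⟩ | ⟨hρr, hρl⟩
  · rw [show σ (Sum.inl i) = ρ (Sum.inl i) from Fin.ext (by omega),
      show σ (Sum.inr i) = ρ (Sum.inr i) from Fin.ext (by omega)]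
    simp
  · have hl := pairedCompletion_of_val_eq_add_one s (i := i)
      (a := σ (Sum.inl i)) (b := ρ (Sum.inl i)) (by omega) (by omega)
    have hr := pairedCompletion_of_val_eq_add_one s (i := i)
      (a := ρ (Sum.inr i)) (b := σ (Sum.inr i)) (by omega) (by omega)
    rw [if_pos (by rw [Ne, Fin.ext_iff]; omega)]
    omega
  · have hl := pairedCompletion_of_val_eq_add_one s (i := i)
      (a := ρ (Sum.inl i)) (b := σ (Sum.inl i)) (by omega) (by omega)
    have hr := pairedCompletion_of_val_eq_add_one s (i := i)
      (a := σ (Sum.inr i)) (b := ρ (Sum.inr i)) (by omega) (by omega)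
    rw [if_pos (by rw [Ne, Fin.ext_iff]; omega)]
    omega
  · rw [show σ (Sum.inl i) = ρ (Sum.inl i) from Fin.ext (by omega),
      show σ (Sum.inr i) = ρ (Sum.inr i) from Fin.ext (by omega)]
    simp

lemma IsPairedSchedule.tardiness_eq (hσ : IsPairedSchedule σ) (hρ : IsPairedSchedule ρ) :
    tardiness (Sum.elim s s) σ ρ =
      ∑ i ∈ univ.filter (fun i => σ (Sum.inl i) ≠ ρ (Sum.inl i)), s i := by
  simp only [tardiness, hσ.completionTime_eq, hρ.completionTime_eq]
  rw [Fintype.sum_sum_type, ← sum_add_distrib, sum_filter]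
  exact sum_congr rfl fun i _ => hσ.pair_lateness_eq hρ i

end PairedSchedules

theorem spt_schedule_tardiness_split_general (n : ℕ)
    (s : Fin n → ℕ)
    (sval : ℕ) (hsum : ∑ i : Fin n, s i = 2 * sval)
    (σa σb σ : (Fin n ⊕ Fin n) ≃ Fin (2 * n))
    (hσa : ∀ i : Fin n, (σa (Sum.inl i) : ℕ) = 2 * (i : ℕ) ∧
      (σa (Sum.inr i) : ℕ) = 2 * (i : ℕ) + 1)
    (hσb : ∀ i : Fin n, (σb (Sum.inr i) : ℕ) = 2 * (i : ℕ) ∧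
      (σb (Sum.inl i) : ℕ) = 2 * (i : ℕ) + 1)
    (hσ : ∀ i : Fin n,
      ((σ (Sum.inl i) : ℕ) = 2 * (i : ℕ) ∧ (σ (Sum.inr i) : ℕ) = 2 * (i : ℕ) + 1) ∨
      ((σ (Sum.inr i) : ℕ) = 2 * (i : ℕ) ∧ (σ (Sum.inl i) : ℕ) = 2 * (i : ℕ) + 1)) :
    tardiness (Sum.elim s s) σ σa
        = ∑ i ∈ Finset.univ.filter (fun i : Fin n => σ (Sum.inr i) < σ (Sum.inl i)), s i ∧
    tardiness (Sum.elim s s) σ σb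
        = ∑ i ∈ Finset.univ.filter (fun i : Fin n => σ (Sum.inl i) < σ (Sum.inr i)), s i ∧
    tardiness (Sum.elim s s) σ σa + tardiness (Sum.elim s s) σ σb = 2 * sval := by
  have hσ' : IsPairedSchedule σ := hσ
  have flipped_a (i : Fin n) :
      σ (Sum.inl i) ≠ σa (Sum.inl i) ↔ σ (Sum.inr i) < σ (Sum.inl i) := by
    have := hσa i
    rw [Ne, Fin.ext_iff, Fin.lt_def]
    rcases hσ i with h | h <;> omega
  have flipped_b (i : Fin n) :
      σ (Sum.inl i) ≠ σb (Sum.inl i) ↔ σ (Sum.inl i) < σ (Sum.inr i) := by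
    have := hσb i
    rw [Ne, Fin.ext_iff, Fin.lt_def]
    rcases hσ i with h | h <;> omega
  have ha := hσ'.tardiness_eq (s := s) (fun i => Or.inl (hσa i))
  have hb := hσ'.tardiness_eq (s := s) (fun i => Or.inr (hσb i))
  rw [filter_congr fun i _ => flipped_a i] at ha
  rw [filter_congr fun i _ => flipped_b i] at hb
  refine ⟨ha, hb, ?_⟩
  have hnot (i : Fin n) : ¬σ (Sum.inr i) < σ (Sum.inl i) ↔ σ (Sum.inl i) < σ (Sum.inr i) :=
    not_lt.trans (σ.injective.ne Sum.inl_ne_inr).le_iff_lt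
  rw [ha, hb, ← filter_congr fun i _ => hnot i, sum_filter_add_sum_filter_not, hsum]

/-- In the two-agent Partition instance (jobs `A_i = Sum.inl i`,
`B_i = Sum.inr i`, both of length `s i`, with `s₁ < … < s_n` summing to `2·sval`;
agent a prefers `(A₁,B₁,…,A_n,B_n)`, agent b prefers `(B₁,A₁,…,B_n,A_n)`), any
schedule `σ` placing each pair `A_i, B_i` at the two consecutive positions
`2i, 2i+1` (0-indexed, in either order) has
`T(σ,σa) = ∑_{i : B_i before A_i} s i`, `T(σ,σb) = ∑_{i : A_i before B_i} s i`,
and total tardiness `T(σ,σa) + T(σ,σb) = 2·sval`. -/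
theorem spt_schedule_tardiness_split (n : ℕ)
    (s : Fin n → ℕ) (hmono : StrictMono s) (hpos : ∀ i, 0 < s i)
    (sval : ℕ) (hsum : ∑ i : Fin n, s i = 2 * sval)
    (σa σb σ : (Fin n ⊕ Fin n) ≃ Fin (2 * n))
    (hσa : ∀ i : Fin n, (σa (Sum.inl i) : ℕ) = 2 * (i : ℕ) ∧
      (σa (Sum.inr i) : ℕ) = 2 * (i : ℕ) + 1)
    (hσb : ∀ i : Fin n, (σb (Sum.inr i) : ℕ) = 2 * (i : ℕ) ∧
      (σb (Sum.inl i) : ℕ) = 2 * (i : ℕ) + 1)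
    (hσ : ∀ i : Fin n,
      ((σ (Sum.inl i) : ℕ) = 2 * (i : ℕ) ∧ (σ (Sum.inr i) : ℕ) = 2 * (i : ℕ) + 1) ∨
      ((σ (Sum.inr i) : ℕ) = 2 * (i : ℕ) ∧ (σ (Sum.inl i) : ℕ) = 2 * (i : ℕ) + 1)) :
    tardiness (Sum.elim s s) σ σa
        = ∑ i ∈ Finset.univ.filter (fun i : Fin n => σ (Sum.inr i) < σ (Sum.inl i)), s i ∧
    tardiness (Sum.elim s s) σ σb
        = ∑ i ∈ Finset.univ.filter (fun i : Fin n => σ (Sum.inl i) < σ (Sum.inr i)), s i ∧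
    tardiness (Sum.elim s s) σ σa + tardiness (Sum.elim s s) σ σb = 2 * sval :=
  spt_schedule_tardiness_split_general n s sval hsum σa σb σ hσa hσb hσ
end

section
/- Fix a real p > 1 and a list of positive integers s₁ < s₂ < … < s_n with total sum 2s. Construct 2n jobs: for each i, jobs A_i and B_i, both of processing time s_i; and two agents with preferred schedules σ_a = (A₁, B₁, A₂, B₂, …, A_n, B_n) and σ_b = (B₁, A₁, B₂, A₂, …, B_n, A_n). Then there exists a schedule σ of the 2n jobs with D(σ,σ_a)^p + D(σ,σ_b)^p ≤ 2·(2s)^p if and only if the multiset {s₁,…,s_n} can be partitioned into two disjoint subsets each of sum s, where D(τ,σ) = ∑_i |C_i(τ) − C_i(σ)|. -/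
/-- Absolute deviation cost: `D(τ,σ) = ∑ i, |C_i(τ) - C_i(σ)|`. -/
def deviation {J : Type*} [Fintype J] {N : ℕ} (p : J → ℕ) (τ σ : J ≃ Fin N) : ℤ :=
  ∑ i : J, |(completionTime p τ i : ℤ) - (completionTime p σ i : ℤ)|

open Finset Sum

private lemma absZ (a b : ℕ) : |(a:ℤ) - (b:ℤ)| = (((a - b) + (b - a) : ℕ) : ℤ) := by
  rw [Int.abs_eq_natAbs]; omega

private lemma ct_split {n N : ℕ} (w : Fin n ⊕ Fin n → ℕ) (τ : (Fin n ⊕ Fin n) ≃ Fin N)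
    (j : Fin n ⊕ Fin n) :
    completionTime w τ j
      = (∑ k : Fin n, if τ (Sum.inl k) ≤ τ j then w (Sum.inl k) else 0)
        + ∑ k : Fin n, if τ (Sum.inr k) ≤ τ j then w (Sum.inr k) else 0 := by
  rw [completionTime, ← Finset.sum_filter, ← Finset.sum_filter]
  rw [show (Finset.univ.filter (fun j' => τ j' ≤ τ j))
      = ((Finset.univ.filter (fun k : Fin n => τ (Sum.inl k) ≤ τ j)).disjSum
          (Finset.univ.filter (fun k : Fin n => τ (Sum.inr k) ≤ τ j))) by
    ext j'; cases j' <;> simp]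
  rw [Finset.sum_disjSum]

private lemma ct_mono {J : Type*} [Fintype J] {N : ℕ} (w : J → ℕ) (τ : J ≃ Fin N)
    {j j' : J} (h : τ j' ≤ τ j) :
    completionTime w τ j' ≤ completionTime w τ j := by
  apply Finset.sum_le_sum_of_subset
  intro k hk
  simp only [Finset.mem_filter, Finset.mem_univ, true_and] at *
  exact le_trans hk h

private lemma ct_trans {J : Type*} [Fintype J] {N : ℕ} (w : J → ℕ) (e : J ≃ J)
    (τ : J ≃ Fin N) (hw : ∀ j, w (e j) = w j) (j : J) :
    completionTime w (e.trans τ) j = completionTime w τ (e j) := by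
  rw [completionTime, completionTime, Finset.sum_filter, Finset.sum_filter]
  rw [← Equiv.sum_comp e (fun k => if τ k ≤ τ (e j) then w k else 0)]
  refine Finset.sum_congr rfl fun k _ => ?_
  simp only [Equiv.trans_apply, hw]
  exact if_congr Iff.rfl rfl rfl

private lemma ct_pair {n : ℕ} (s : Fin n → ℕ) (τ : (Fin n ⊕ Fin n) ≃ Fin (2*n))
    (h : ∀ i : Fin n, (τ (Sum.inl i) : ℕ) = 2*(i:ℕ) ∧ (τ (Sum.inr i):ℕ) = 2*(i:ℕ)+1)
    (i : Fin n) :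
    completionTime (Sum.elim s s) τ (Sum.inl i) = 2 * (∑ k ∈ Iio i, s k) + s i ∧
    completionTime (Sum.elim s s) τ (Sum.inr i) = 2 * (∑ k ∈ Iio i, s k) + 2 * s i := by
  have hIic : ∑ k ∈ Iic i, s k = ∑ k ∈ Iio i, s k + s i := by
    rw [← Finset.Iio_insert, Finset.sum_insert (by simp)]; ring
  constructor
  · rw [ct_split]
    have h1 : (∑ k : Fin n, if τ (Sum.inl k) ≤ τ (Sum.inl i) then Sum.elim s s (Sum.inl k) else 0)
        = ∑ k ∈ Iic i, s k := by
      rw [← Finset.sum_filter]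
      refine Finset.sum_congr ?_ (fun k _ => rfl)
      ext k
      simp only [Finset.mem_filter, Finset.mem_univ, true_and, Finset.mem_Iic,
        Fin.le_def, (h k).1, (h i).1]
      omega
    have h2 : (∑ k : Fin n, if τ (Sum.inr k) ≤ τ (Sum.inl i) then Sum.elim s s (Sum.inr k) else 0)
        = ∑ k ∈ Iio i, s k := by
      rw [← Finset.sum_filter]
      refine Finset.sum_congr ?_ (fun k _ => rfl)
      ext k
      simp only [Finset.mem_filter, Finset.mem_univ, true_and, Finset.mem_Iio,
        Fin.le_def, Fin.lt_def, (h k).2, (h i).1]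
      omega
    rw [h1, h2, hIic]; ring
  · rw [ct_split]
    have h1 : (∑ k : Fin n, if τ (Sum.inl k) ≤ τ (Sum.inr i) then Sum.elim s s (Sum.inl k) else 0)
        = ∑ k ∈ Iic i, s k := by
      rw [← Finset.sum_filter]
      refine Finset.sum_congr ?_ (fun k _ => rfl)
      ext k
      simp only [Finset.mem_filter, Finset.mem_univ, true_and, Finset.mem_Iic,
        Fin.le_def, (h k).1, (h i).2]
      omega
    have h2 : (∑ k : Fin n, if τ (Sum.inr k) ≤ τ (Sum.inr i) then Sum.elim s s (Sum.inr k) else 0)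
        = ∑ k ∈ Iic i, s k := by
      rw [← Finset.sum_filter]
      refine Finset.sum_congr ?_ (fun k _ => rfl)
      ext k
      simp only [Finset.mem_filter, Finset.mem_univ, true_and, Finset.mem_Iic,
        Fin.le_def, (h k).2, (h i).2]
      omega
    rw [h1, h2, hIic]; ring

private def idx {n : ℕ} : Fin n ⊕ Fin n → Fin n := Sum.elim id id

@[simp] private lemma idx_inl {n : ℕ} (i : Fin n) : idx (Sum.inl i) = i := rfl
@[simp] private lemma idx_inr {n : ℕ} (i : Fin n) : idx (Sum.inr i) = i := rfl

private lemma filter_idx_lt {n : ℕ} (i : Fin n) :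
    (Finset.univ.filter (fun j : Fin n ⊕ Fin n => idx j < i))
      = (Iio i).disjSum (Iio i) := by
  ext j; cases j <;> simp

private lemma filter_idx_gt {n : ℕ} (i : Fin n) :
    (Finset.univ.filter (fun j : Fin n ⊕ Fin n => i < idx j))
      = (Ioi i).disjSum (Ioi i) := by
  ext j; cases j <;> simp

private lemma filter_idx_le {n : ℕ} (i : Fin n) :
    (Finset.univ.filter (fun j : Fin n ⊕ Fin n => idx j ≤ i))
      = (Iic i).disjSum (Iic i) := by
  ext j; cases j <;> simp

/-- Core of the NP-hardness of the L_p-D rule (reduction from Partition).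
Jobs `A_i = Sum.inl i` and `B_i = Sum.inr i` both have processing time `s i`,
where `s₁ < … < s_n` are positive with total sum `2·sval`; agent a prefers
`(A₁,B₁,…,A_n,B_n)` and agent b prefers `(B₁,A₁,…,B_n,A_n)`.  Then there is a
schedule `σ` with `D(σ,σa)^p + D(σ,σb)^p ≤ 2·(2·sval)^p` iff `{s₁,…,s_n}` can be
partitioned into two disjoint subsets each summing to `sval`. -/
theorem lp_deviation_partition_reduction (p : ℝ) (hp : 1 < p) (n : ℕ)
    (s : Fin n → ℕ) (hmono : StrictMono s) (hpos : ∀ i, 0 < s i)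
    (sval : ℕ) (hsum : ∑ i : Fin n, s i = 2 * sval)
    (σa σb : (Fin n ⊕ Fin n) ≃ Fin (2 * n))
    (hσa : ∀ i : Fin n, (σa (Sum.inl i) : ℕ) = 2 * (i : ℕ) ∧
      (σa (Sum.inr i) : ℕ) = 2 * (i : ℕ) + 1)
    (hσb : ∀ i : Fin n, (σb (Sum.inr i) : ℕ) = 2 * (i : ℕ) ∧
      (σb (Sum.inl i) : ℕ) = 2 * (i : ℕ) + 1) :
    (∃ σ : (Fin n ⊕ Fin n) ≃ Fin (2 * n),
        ((deviation (Sum.elim s s) σ σa : ℝ) ^ p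
          + (deviation (Sum.elim s s) σ σb : ℝ) ^ p ≤ 2 * ((2 * sval : ℕ) : ℝ) ^ p))
      ↔ (∃ A : Finset (Fin n), ∑ i ∈ A, s i = sval ∧ ∑ i ∈ Aᶜ, s i = sval) := by
  set w : Fin n ⊕ Fin n → ℕ := Sum.elim s s with hw_def
  set E : Fin n → ℕ := fun i => ∑ k ∈ Iio i, s k with hE_def
  -- completion times of the two preferred schedules
  have hCa : ∀ i : Fin n, completionTime w σa (Sum.inl i) = 2 * E i + s i ∧
      completionTime w σa (Sum.inr i) = 2 * E i + 2 * s i := ct_pair s σa hσa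
  have hwswap : ∀ j, w ((Equiv.sumComm (Fin n) (Fin n)) j) = w j := by
    intro j; cases j <;> rfl
  have hτ' : ∀ i : Fin n,
      ((((Equiv.sumComm (Fin n) (Fin n)).trans σb) (Sum.inl i) : Fin (2*n)) : ℕ) = 2*(i:ℕ) ∧
      ((((Equiv.sumComm (Fin n) (Fin n)).trans σb) (Sum.inr i) : Fin (2*n)) : ℕ) = 2*(i:ℕ)+1 := by
    intro i
    refine ⟨?_, ?_⟩
    · simpa using (hσb i).1
    · simpa using (hσb i).2
  have hCb : ∀ i : Fin n, completionTime w σb (Sum.inl i) = 2 * E i + 2 * s i ∧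
      completionTime w σb (Sum.inr i) = 2 * E i + s i := by
    intro i
    have h1 := (ct_pair s ((Equiv.sumComm (Fin n) (Fin n)).trans σb) hτ' i).1
    have h2 := (ct_pair s ((Equiv.sumComm (Fin n) (Fin n)).trans σb) hτ' i).2
    rw [ct_trans w _ σb hwswap] at h1 h2
    simp only [Equiv.sumComm_apply, Sum.swap_inl, Sum.swap_inr] at h1 h2
    exact ⟨h2, h1⟩
  have hcast : ((2 * sval : ℕ) : ℝ) = ((2 * sval : ℤ) : ℝ) := by push_cast; ring
  constructor
  · -- forward
    rintro ⟨σ, hle⟩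
    classical
    have htri : ∀ j : Fin n ⊕ Fin n,
        |(completionTime w σa j : ℤ) - (completionTime w σb j : ℤ)|
          ≤ |(completionTime w σ j : ℤ) - (completionTime w σa j : ℤ)|
            + |(completionTime w σ j : ℤ) - (completionTime w σb j : ℤ)| := by
      intro j
      calc |(completionTime w σa j : ℤ) - (completionTime w σb j : ℤ)|
          ≤ |(completionTime w σa j : ℤ) - (completionTime w σ j : ℤ)|
            + |(completionTime w σ j : ℤ) - (completionTime w σb j : ℤ)| :=
            abs_sub_le _ _ _
        _ = _ := by rw [abs_sub_comm ((completionTime w σa j : ℤ))]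
    have hsumab : (∑ j : Fin n ⊕ Fin n,
        |(completionTime w σa j : ℤ) - (completionTime w σb j : ℤ)|) = 4 * (sval : ℤ) := by
      rw [Fintype.sum_sum_type]
      have e1 : ∀ i : Fin n,
          |(completionTime w σa (Sum.inl i) : ℤ) - (completionTime w σb (Sum.inl i) : ℤ)|
            = (s i : ℤ) := by
        intro i; rw [(hCa i).1, (hCb i).1, absZ]; push_cast; omega
      have e2 : ∀ i : Fin n,
          |(completionTime w σa (Sum.inr i) : ℤ) - (completionTime w σb (Sum.inr i) : ℤ)|
            = (s i : ℤ) := by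
        intro i; rw [(hCa i).2, (hCb i).2, absZ]; push_cast; omega
      rw [Finset.sum_congr rfl fun i _ => e1 i, Finset.sum_congr rfl fun i _ => e2 i]
      have hs : (∑ i : Fin n, (s i : ℤ)) = 2 * (sval : ℤ) := by
        rw [← Nat.cast_sum, hsum]; push_cast; ring
      rw [hs]; ring
    have hDsum_ge : 4 * (sval : ℤ) ≤ deviation w σ σa + deviation w σ σb := by
      rw [deviation, deviation, ← Finset.sum_add_distrib, ← hsumab]
      exact Finset.sum_le_sum fun j _ => htri j
    have hDa0 : (0:ℤ) ≤ deviation w σ σa := Finset.sum_nonneg fun _ _ => abs_nonneg _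
    have hDb0 : (0:ℤ) ≤ deviation w σ σb := Finset.sum_nonneg fun _ _ => abs_nonneg _
    set x : ℝ := ((deviation w σ σa : ℤ) : ℝ) with hx_def
    set y : ℝ := ((deviation w σ σb : ℤ) : ℝ) with hy_def
    have hx0 : (0:ℝ) ≤ x := by rw [hx_def]; exact_mod_cast hDa0
    have hy0 : (0:ℝ) ≤ y := by rw [hy_def]; exact_mod_cast hDb0
    have hxy4 : 4 * (sval : ℝ) ≤ x + y := by
      rw [hx_def, hy_def]
      exact_mod_cast hDsum_ge
    have hc : ((2 * sval : ℕ) : ℝ) = 2 * (sval : ℝ) := by push_cast; ring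
    rw [hc] at hle
    have hp0 : (0:ℝ) < p := lt_trans one_pos hp
    have hxeqy : x = y := by
      by_contra hne
      have hcv := (strictConvexOn_rpow hp).2 (Set.mem_Ici.mpr hx0) (Set.mem_Ici.mpr hy0) hne
        (by norm_num : (0:ℝ) < 1/2) (by norm_num : (0:ℝ) < 1/2) (by norm_num)
      simp only [smul_eq_mul] at hcv
      have hmid : 2 * (sval : ℝ) ≤ 1/2 * x + 1/2 * y := by linarith
      have h1 : (2 * (sval : ℝ)) ^ p ≤ (1/2 * x + 1/2 * y) ^ p :=
        Real.rpow_le_rpow (by positivity) hmid (le_of_lt hp0)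
      linarith
    have hxle : x ≤ 2 * (sval : ℝ) := by
      by_contra hlt
      push_neg at hlt
      have h1 : (2 * (sval : ℝ)) ^ p < x ^ p := Real.rpow_lt_rpow (by positivity) hlt hp0
      rw [← hxeqy] at hle
      linarith
    have hxval : x = 2 * (sval : ℝ) := le_antisymm hxle (by linarith [hxy4, hxeqy])
    have hDaZ : deviation w σ σa = 2 * (sval : ℤ) := by
      have : ((deviation w σ σa : ℤ) : ℝ) = ((2 * (sval : ℤ) : ℤ) : ℝ) := by
        rw [← hx_def, hxval]; push_cast; ring
      exact_mod_cast this
    have hDbZ : deviation w σ σb = 2 * (sval : ℤ) := by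
      have : ((deviation w σ σb : ℤ) : ℝ) = ((2 * (sval : ℤ) : ℤ) : ℝ) := by
        rw [← hy_def, ← hxeqy, hxval]; push_cast; ring
      exact_mod_cast this
    have htight : ∀ j : Fin n ⊕ Fin n,
        |(completionTime w σ j : ℤ) - (completionTime w σa j : ℤ)|
          + |(completionTime w σ j : ℤ) - (completionTime w σb j : ℤ)|
          = |(completionTime w σa j : ℤ) - (completionTime w σb j : ℤ)| := by
      have hsum_eq : (∑ j : Fin n ⊕ Fin n,
          |(completionTime w σa j : ℤ) - (completionTime w σb j : ℤ)|)
          = ∑ j : Fin n ⊕ Fin n,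
            (|(completionTime w σ j : ℤ) - (completionTime w σa j : ℤ)|
              + |(completionTime w σ j : ℤ) - (completionTime w σb j : ℤ)|) := by
        rw [hsumab]
        calc (4 * (sval:ℤ)) = 2 * (sval:ℤ) + 2 * (sval:ℤ) := by ring
          _ = deviation w σ σa + deviation w σ σb := by rw [hDaZ, hDbZ]
          _ = _ := by rw [deviation, deviation, ← Finset.sum_add_distrib]
      have hall := (Finset.sum_eq_sum_iff_of_le (fun j _ => htri j)).mp hsum_eq
      intro j
      exact (hall j (Finset.mem_univ j)).symm
    have hbnd : ∀ j : Fin n ⊕ Fin n,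
        2 * E (idx j) + s (idx j) ≤ completionTime w σ j ∧
          completionTime w σ j ≤ 2 * E (idx j) + 2 * s (idx j) := by
      intro j
      rcases j with i | i
      · have h := htight (Sum.inl i)
        rw [(hCa i).1, (hCb i).1, absZ, absZ, absZ] at h
        simp only [idx_inl]
        push_cast at h
        omega
      · have h := htight (Sum.inr i)
        rw [(hCa i).2, (hCb i).2, absZ, absZ, absZ] at h
        simp only [idx_inr]
        push_cast at h
        omega
    have hIicE : ∀ i : Fin n, ∑ k ∈ Iic i, s k = E i + s i := by
      intro i
      rw [← Finset.Iio_insert, Finset.sum_insert (by simp)]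
      simp only [hE_def]
      exact Nat.add_comm _ _
    have horder : ∀ j j' : Fin n ⊕ Fin n, idx j < idx j' → σ j < σ j' := by
      intro j j' hlt
      have hm : E (idx j) + s (idx j) ≤ E (idx j') := by
        have hss : Iic (idx j) ⊆ Iio (idx j') :=
          fun k hk => Finset.mem_Iio.mpr (lt_of_le_of_lt (Finset.mem_Iic.mp hk) hlt)
        calc E (idx j) + s (idx j) = ∑ k ∈ Iic (idx j), s k := (hIicE _).symm
          _ ≤ ∑ k ∈ Iio (idx j'), s k := Finset.sum_le_sum_of_subset hss
          _ = E (idx j') := by simp only [hE_def]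
      have h1 : completionTime w σ j < completionTime w σ j' := by
        have hb1 := (hbnd j).2
        have hb2 := (hbnd j').1
        have := hpos (idx j')
        omega
      by_contra hnl
      push_neg at hnl
      exact absurd (ct_mono w σ hnl) (by omega)
    have hposbnd : ∀ j : Fin n ⊕ Fin n,
        2 * ((idx j : Fin n) : ℕ) ≤ (σ j : ℕ) ∧ (σ j : ℕ) ≤ 2 * ((idx j : Fin n) : ℕ) + 1 := by
      intro j
      constructor
      · have hcard : (Finset.univ.filter (fun j' : Fin n ⊕ Fin n => idx j' < idx j)).card
            ≤ (Finset.Iio (σ j)).card := by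
          apply Finset.card_le_card_of_injOn σ
          · intro j' hj'
            simp only [Finset.coe_filter, Finset.mem_univ, true_and, Set.mem_setOf_eq] at hj'
            exact Finset.mem_Iio.mpr (horder _ _ hj')
          · exact σ.injective.injOn
        have c1 : (Finset.univ.filter (fun j' : Fin n ⊕ Fin n => idx j' < idx j)).card
            = 2 * ((idx j : Fin n) : ℕ) := by
          rw [filter_idx_lt, Finset.card_disjSum, Fin.card_Iio]; ring
        have c2 : (Finset.Iio (σ j)).card = (σ j : ℕ) := Fin.card_Iio _
        omega
      · have hcard : (Finset.univ.filter (fun j' : Fin n ⊕ Fin n => idx j < idx j')).card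
            ≤ (Finset.Ioi (σ j)).card := by
          apply Finset.card_le_card_of_injOn σ
          · intro j' hj'
            simp only [Finset.coe_filter, Finset.mem_univ, true_and, Set.mem_setOf_eq] at hj'
            exact Finset.mem_Ioi.mpr (horder _ _ hj')
          · exact σ.injective.injOn
        have c1 : (Finset.univ.filter (fun j' : Fin n ⊕ Fin n => idx j < idx j')).card
            = 2 * (n - 1 - ((idx j : Fin n) : ℕ)) := by
          rw [filter_idx_gt, Finset.card_disjSum, Fin.card_Ioi]; ring
        have c2 : (Finset.Ioi (σ j)).card = 2 * n - 1 - (σ j : ℕ) := Fin.card_Ioi _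
        have hjn : ((idx j : Fin n) : ℕ) < n := (idx j).isLt
        have hσn : (σ j : ℕ) < 2 * n := (σ j).isLt
        omega
    have hwj : ∀ j : Fin n ⊕ Fin n, w j = s (idx j) := by
      intro j; rcases j with i | i <;> simp [hw_def]
    have hC1 : ∀ j : Fin n ⊕ Fin n, (σ j : ℕ) = 2 * ((idx j : Fin n) : ℕ) + 1 →
        completionTime w σ j = 2 * E (idx j) + 2 * s (idx j) := by
      intro j hj
      have hfil : Finset.univ.filter (fun j' => σ j' ≤ σ j)
          = Finset.univ.filter (fun j' : Fin n ⊕ Fin n => idx j' ≤ idx j) := by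
        ext j'
        simp only [Finset.mem_filter, Finset.mem_univ, true_and, Fin.le_def, hj]
        have h1 := hposbnd j'
        omega
      rw [completionTime, hfil, filter_idx_le, Finset.sum_disjSum]
      simp only [hwj, idx_inl, idx_inr]
      rw [hIicE (idx j)]
      ring
    have hC0 : ∀ j : Fin n ⊕ Fin n, (σ j : ℕ) = 2 * ((idx j : Fin n) : ℕ) →
        completionTime w σ j = 2 * E (idx j) + s (idx j) := by
      intro j hj
      have hfil : Finset.univ.filter (fun j' => σ j' ≤ σ j)
          = insert j (Finset.univ.filter (fun j' : Fin n ⊕ Fin n => idx j' < idx j)) := by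
        ext j'
        simp only [Finset.mem_filter, Finset.mem_univ, true_and, Finset.mem_insert, Fin.le_def,
          Fin.lt_def, hj]
        have h1 := hposbnd j'
        constructor
        · intro h
          by_cases hcc : ((idx j' : Fin n) : ℕ) < ((idx j : Fin n) : ℕ)
          · exact Or.inr hcc
          · left
            have hvv : (σ j' : ℕ) = (σ j : ℕ) := by omega
            exact σ.injective (Fin.val_injective hvv)
        · intro h
          rcases h with h | h
          · subst h; omega
          · omega
      rw [completionTime, hfil, Finset.sum_insert (by simp), filter_idx_lt, Finset.sum_disjSum]
      simp only [hwj, idx_inl, idx_inr]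
      simp only [hE_def]
      ring
    have hcase : ∀ i : Fin n, ((σ (Sum.inl i) : ℕ) = 2*(i:ℕ) ∧ (σ (Sum.inr i):ℕ) = 2*(i:ℕ)+1)
        ∨ ((σ (Sum.inl i):ℕ) = 2*(i:ℕ)+1 ∧ (σ (Sum.inr i):ℕ) = 2*(i:ℕ)) := by
      intro i
      have h1 := hposbnd (Sum.inl i)
      have h2 := hposbnd (Sum.inr i)
      simp only [idx_inl, idx_inr] at h1 h2
      have hne : (σ (Sum.inl i):ℕ) ≠ (σ (Sum.inr i):ℕ) := by
        intro hh
        exact (by simp : (Sum.inl i : Fin n ⊕ Fin n) ≠ Sum.inr i)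
          (σ.injective (Fin.val_injective hh))
      omega
    set A : Finset (Fin n) := Finset.univ.filter (fun i => (σ (Sum.inl i) : ℕ) = 2*(i:ℕ))
      with hA_def
    have hterm : ∀ i : Fin n,
        (|(completionTime w σ (Sum.inl i):ℤ) - (completionTime w σa (Sum.inl i):ℤ)|
          + |(completionTime w σ (Sum.inr i):ℤ) - (completionTime w σa (Sum.inr i):ℤ)|)
        = if i ∈ A then 0 else 2*(s i:ℤ) := by
      intro i
      rcases hcase i with ⟨h1, h2⟩ | ⟨h1, h2⟩
      · have hiA : i ∈ A := by
          rw [hA_def]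
          simp only [Finset.mem_filter, Finset.mem_univ, true_and, h1]
        rw [if_pos hiA]
        have e1 := hC0 (Sum.inl i) (by simpa using h1)
        have e2 := hC1 (Sum.inr i) (by simpa using h2)
        simp only [idx_inl, idx_inr] at e1 e2
        rw [e1, e2, (hCa i).1, (hCa i).2, absZ, absZ]
        push_cast
        omega
      · have hiA : i ∉ A := by
          rw [hA_def]
          simp only [Finset.mem_filter, Finset.mem_univ, true_and, h1]
          omega
        rw [if_neg hiA]
        have e1 := hC1 (Sum.inl i) (by simpa using h1)
        have e2 := hC0 (Sum.inr i) (by simpa using h2)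
        simp only [idx_inl, idx_inr] at e1 e2
        rw [e1, e2, (hCa i).1, (hCa i).2, absZ, absZ]
        push_cast
        omega
    have hDaA : deviation w σ σa = ∑ i ∈ Aᶜ, 2 * (s i : ℤ) := by
      rw [deviation, Fintype.sum_sum_type, ← Finset.sum_add_distrib]
      rw [Finset.sum_congr rfl fun i _ => hterm i, Finset.sum_ite, Finset.sum_const_zero,
        zero_add]
      congr 1
      ext; simp
    have hAc : ∑ i ∈ Aᶜ, s i = sval := by
      have h1 : (∑ i ∈ Aᶜ, 2 * (s i:ℤ)) = 2*(sval:ℤ) := by rw [← hDaA, hDaZ]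
      have h3 : (∑ i ∈ Aᶜ, 2*(s i:ℤ)) = 2 * ((∑ i ∈ Aᶜ, s i : ℕ):ℤ) := by
        push_cast
        rw [Finset.mul_sum]
      rw [h3] at h1
      have h4 := mul_left_cancel₀ (by norm_num : (2:ℤ) ≠ 0) h1
      exact_mod_cast h4
    have hAs : ∑ i ∈ A, s i = sval := by
      have h5 := Finset.sum_compl_add_sum A s
      rw [hsum, hAc] at h5
      omega
    exact ⟨A, hAs, hAc⟩
  · -- backward: partition → schedule
    rintro ⟨A, hA1, hA2⟩
    classical
    set g : Fin n ⊕ Fin n → Fin n ⊕ Fin n :=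
      Sum.elim (fun i => if i ∈ A then Sum.inl i else Sum.inr i)
        (fun i => if i ∈ A then Sum.inr i else Sum.inl i) with hg_def
    have hg : Function.Involutive g := by
      intro j
      rcases j with i | i <;> by_cases hi : i ∈ A <;> simp [hg_def, hi]
    set e : (Fin n ⊕ Fin n) ≃ (Fin n ⊕ Fin n) := ⟨g, g, hg.leftInverse, hg.rightInverse⟩
      with he_def
    have hwe : ∀ j, w (e j) = w j := by
      intro j
      rcases j with i | i <;> by_cases hi : i ∈ A <;>
        simp [he_def, hg_def, hi, hw_def]
    refine ⟨e.trans σa, ?_⟩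
    have hct : ∀ j, completionTime w (e.trans σa) j = completionTime w σa (e j) :=
      ct_trans w e σa hwe
    have hDa : deviation w (e.trans σa) σa = 2 * (sval : ℤ) := by
      rw [deviation, Fintype.sum_sum_type, ← Finset.sum_add_distrib]
      have : ∀ i : Fin n,
          (|(completionTime w (e.trans σa) (Sum.inl i) : ℤ) - (completionTime w σa (Sum.inl i) : ℤ)|
           + |(completionTime w (e.trans σa) (Sum.inr i) : ℤ) - (completionTime w σa (Sum.inr i) : ℤ)|)
          = if i ∈ A then 0 else 2 * (s i : ℤ) := by
        intro i
        by_cases hi : i ∈ A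
        · rw [hct, hct]
          simp only [he_def, hg_def, Equiv.coe_fn_mk, Sum.elim_inl, Sum.elim_inr, hi, if_pos]
          simp [absZ]
        · rw [hct, hct]
          simp only [he_def, hg_def, Equiv.coe_fn_mk, Sum.elim_inl, Sum.elim_inr, hi, if_neg,
            not_false_iff]
          rw [(hCa i).1, (hCa i).2, absZ, absZ]
          push_cast
          omega
      rw [Finset.sum_congr rfl (fun i _ => this i), Finset.sum_ite, Finset.sum_const_zero,
        zero_add]
      have hfc : Finset.univ.filter (fun i => ¬ i ∈ A) = Aᶜ := by ext; simp
      rw [hfc]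
      calc ∑ i ∈ Aᶜ, 2 * (s i : ℤ) = ((∑ i ∈ Aᶜ, 2 * s i : ℕ) : ℤ) := by push_cast; ring
        _ = 2 * (sval : ℤ) := by rw [← Finset.mul_sum, hA2]; push_cast; ring
    have hDb : deviation w (e.trans σa) σb = 2 * (sval : ℤ) := by
      rw [deviation, Fintype.sum_sum_type, ← Finset.sum_add_distrib]
      have : ∀ i : Fin n,
          (|(completionTime w (e.trans σa) (Sum.inl i) : ℤ) - (completionTime w σb (Sum.inl i) : ℤ)|
           + |(completionTime w (e.trans σa) (Sum.inr i) : ℤ) - (completionTime w σb (Sum.inr i) : ℤ)|)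
          = if i ∈ A then 2 * (s i : ℤ) else 0 := by
        intro i
        by_cases hi : i ∈ A
        · rw [hct, hct]
          simp only [he_def, hg_def, Equiv.coe_fn_mk, Sum.elim_inl, Sum.elim_inr, hi, if_pos]
          rw [(hCa i).1, (hCa i).2, (hCb i).1, (hCb i).2, absZ, absZ]
          push_cast
          omega
        · rw [hct, hct]
          simp only [he_def, hg_def, Equiv.coe_fn_mk, Sum.elim_inl, Sum.elim_inr, hi, if_neg,
            not_false_iff]
          rw [(hCa i).1, (hCa i).2, (hCb i).1, (hCb i).2, absZ, absZ]
          push_cast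
          omega
      rw [Finset.sum_congr rfl (fun i _ => this i), Finset.sum_ite, Finset.sum_const_zero,
        add_zero]
      have hfc : Finset.univ.filter (fun i => i ∈ A) = A := by ext; simp
      rw [hfc]
      calc ∑ i ∈ A, 2 * (s i : ℤ) = ((∑ i ∈ A, 2 * s i : ℕ) : ℤ) := by push_cast; ring
        _ = 2 * (sval : ℤ) := by rw [← Finset.mul_sum, hA1]; push_cast; ring
    rw [hDa, hDb]
    have h2 : ((2 * (sval:ℤ) : ℤ) : ℝ) = ((2 * sval : ℕ) : ℝ) := by push_cast; ring
    rw [h2]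
    linarith
end
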